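/- Assume the [SK]-hypothesis: there is a continuous map K from the unit sphere S^{n−1} to the real N×N matrices such that for every ω ∈ S^{n−1}, K(−ω) = −K(ω), K(ω)A⁰ is skew-symmetric, and [K(ω)A(ω)]' + L is positive definite. Then there exists a constant c > 0 such that for every ξ ∈ ℝⁿ with ξ ≠ 0, every λ ∈ ℂ and every v ∈ ℂ^N with v ≠ 0 satisfying (λ A⁰ + i A(ξ) + L) v = 0, one has Re λ ≤ − c |ξ|² / (1 + |ξ|²). -/

import Mathlib

open Matrix

/-- The action of a real `N × N` matrix on `ℂ^N`, via complexification. -/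
noncomputable def matC {N : ℕ} (M : Matrix (Fin N) (Fin N) ℝ) :
    EuclideanSpace ℂ (Fin N) →ₗ[ℂ] EuclideanSpace ℂ (Fin N) :=
  Matrix.toEuclideanLin (M.map (Complex.ofReal))

/-- The symmetric part `[X]' = (X + Xᵀ)/2` of a square matrix. -/
noncomputable def symPart {N : ℕ} (X : Matrix (Fin N) (Fin N) ℝ) : Matrix (Fin N) (Fin N) ℝ :=
  (2⁻¹ : ℝ) • (X + X.transpose)

/-!
Energy method of Shizuta and Kawashima. Write `L = BᵀB`, `ξ = r ω` with `|ω| = 1` and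
`μ = -Re λ`. Pairing the eigenvalue equation with `v` and taking real parts gives
`μ ⟨A⁰v, v⟩ = |Bv|²`. Applying `K(ω)` first and taking imaginary parts, the skew-symmetry of
`K(ω)A⁰` leaves `r Re⟨K(ω)A(ω)v, v⟩ = μ Im⟨K(ω)A⁰v, v⟩ - Im⟨K(ω)Lv, v⟩`. On the compact sphere
`[K(ω)A(ω)]' + L ≥ θ > 0` uniformly, so `θ r |v|² ≤ r Re⟨K(ω)A(ω)v, v⟩ + r |Bv|²`; bounding the
right-hand side with `|Bv|² ≤ μ |A⁰| |v|²` gives `θ r ≤ C (μ + √μ + r μ)`, which forces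
`μ ≥ c r² / (1 + r²)`.
-/

open scoped InnerProductSpace ComplexConjugate

theorem IsCompact.exists_pos_forall_mul_norm_sq_le_re_inner {𝕜 X E : Type*} [RCLike 𝕜]
    [TopologicalSpace X] [NormedAddCommGroup E] [InnerProductSpace 𝕜 E] [ProperSpace E]
    {S : Set X} (hS : IsCompact S) {T : X → E →L[𝕜] E} (hT : ContinuousOn T S)
    (hpos : ∀ x ∈ S, ∀ u ≠ 0, 0 < RCLike.re ⟪u, T x u⟫_𝕜) :
    ∃ θ > 0, ∀ x ∈ S, ∀ u, θ * ‖u‖ ^ 2 ≤ RCLike.re ⟪u, T x u⟫_𝕜 := by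
  have hcont : ContinuousOn (fun p : X × E => RCLike.re ⟪p.2, T p.1 p.2⟫_𝕜)
      (S ×ˢ Metric.sphere 0 1) :=
    RCLike.continuous_re.comp_continuousOn <| continuousOn_snd.inner <|
      (hT.comp continuousOn_fst fun _ hp => hp.1).clm_apply continuousOn_snd
  obtain ⟨θ, hθ, hmin⟩ := (hS.prod (isCompact_sphere 0 1)).exists_forall_le' hcont
    fun p hp => hpos p.1 hp.1 p.2 (ne_zero_of_mem_unit_sphere ⟨p.2, hp.2⟩)
  refine ⟨θ, hθ, fun x hx u => ?_⟩
  rcases eq_or_ne u 0 with rfl | hu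
  · simp
  have hu' : 0 < ‖u‖ := norm_pos_iff.mpr hu
  have h := hmin (x, ((‖u‖⁻¹ : ℝ) : 𝕜) • u) ⟨hx, by simp [norm_smul, hu'.ne']⟩
  simp only [map_smul, inner_smul_left, inner_smul_right, RCLike.conj_ofReal, ← mul_assoc,
    ← RCLike.ofReal_mul, RCLike.re_ofReal_mul] at h
  calc θ * ‖u‖ ^ 2 ≤ ‖u‖⁻¹ * ‖u‖⁻¹ * RCLike.re ⟪u, T x u⟫_𝕜 * ‖u‖ ^ 2 := by gcongr
    _ = RCLike.re ⟪u, T x u⟫_𝕜 := by field_simp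

lemma min_mul_sq_div_one_add_sq_le {θ C r μ : ℝ} (hθ : 0 < θ) (hC : 0 < C) (hr : 0 < r)
    (h : θ * r ≤ C * (μ + √μ + r * μ)) :
    min (θ / (3 * C)) ((θ / (3 * C)) ^ 2) * r ^ 2 / (1 + r ^ 2) ≤ μ := by
  set k := θ / (3 * C)
  have hk : 0 < k := by positivity
  have hθk : θ = 3 * C * k := by simp only [k]; field_simp
  set s := r ^ 2 / (1 + r ^ 2)
  have hs0 : 0 ≤ s := by positivity
  have hs1 : s ≤ 1 := div_le_one_of_le₀ (by linarith) (by positivity)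
  have hsr : s ≤ r := by rw [div_le_iff₀ (by positivity)]; nlinarith [sq_nonneg (r - 1)]
  have hsr2 : s ≤ r ^ 2 := div_le_self (sq_nonneg r) (by nlinarith)
  rw [mul_div_assoc]
  -- otherwise `μ`, `√μ` and `r μ` are each at most `k r`, the first strictly, contradicting `h`
  by_contra! hlt
  have h1 : μ < k * r := hlt.trans_le <| calc
    min k (k ^ 2) * s ≤ k * s := by gcongr; exact min_le_left _ _
    _ ≤ k * r := by gcongr
  have h2 : √μ < k * r := (Real.sqrt_lt' (by positivity)).2 <| hlt.trans_le <| calc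
    min k (k ^ 2) * s ≤ k ^ 2 * s := by gcongr; exact min_le_right _ _
    _ ≤ (k * r) ^ 2 := by rw [mul_pow]; gcongr
  have h3 : r * μ ≤ r * k := by
    refine mul_le_mul_of_nonneg_left (hlt.le.trans ?_) hr.le
    calc min k (k ^ 2) * s ≤ k * s := by gcongr; exact min_le_left _ _
      _ ≤ k := mul_le_of_le_one_right hk.le hs1
  have : C * (μ + √μ + r * μ) < θ * r := by
    rw [hθk]; nlinarith
  linarith

section

variable {N : ℕ}

noncomputable def matCL (M : Matrix (Fin N) (Fin N) ℝ) :
    EuclideanSpace ℂ (Fin N) →L[ℂ] EuclideanSpace ℂ (Fin N) :=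
  toEuclideanCLM (n := Fin N) (𝕜 := ℂ) (M.map Complex.ofReal)

@[simp] lemma matCL_apply (M : Matrix (Fin N) (Fin N) ℝ) (v : EuclideanSpace ℂ (Fin N)) :
    matCL M v = matC M v := rfl

lemma continuous_matCL : Continuous (matCL (N := N)) :=
  show Continuous (_ ∘ _) from (LinearMap.continuous_of_finiteDimensional
    (toEuclideanCLM (n := Fin N) (𝕜 := ℂ)).toAlgEquiv.toLinearEquiv.toLinearMap).comp
    (continuous_id.matrix_map Complex.continuous_ofReal)

lemma matCL_mul (P Q : Matrix (Fin N) (Fin N) ℝ) : matCL (P * Q) = matCL P * matCL Q := by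
  rw [matCL, show (P * Q).map Complex.ofReal = P.map Complex.ofReal * Q.map Complex.ofReal from
    Matrix.map_mul (f := Complex.ofRealHom), map_mul]; rfl

lemma matC_mul_apply (P Q : Matrix (Fin N) (Fin N) ℝ) (v : EuclideanSpace ℂ (Fin N)) :
    matC (P * Q) v = matC P (matC Q v) := by
  simp only [← matCL_apply, matCL_mul]; rfl

lemma matC_add (P Q : Matrix (Fin N) (Fin N) ℝ) : matC (P + Q) = matC P + matC Q := by
  rw [matC, Matrix.map_add _ Complex.ofReal_add, map_add]; rfl

lemma matC_smul (r : ℝ) (M : Matrix (Fin N) (Fin N) ℝ) : matC (r • M) = (r : ℂ) • matC M := by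
  rw [matC, matC, ← map_smul]; congr 1; ext; simp

lemma matC_neg (M : Matrix (Fin N) (Fin N) ℝ) : matC (-M) = -matC M := by
  rw [matC, Matrix.map_neg _ Complex.ofReal_neg, map_neg]; rfl

lemma continuous_symPart : Continuous (symPart (N := N)) := by
  unfold symPart; fun_prop

lemma isSymm_sum_smul {n : ℕ} {A : Fin n → Matrix (Fin N) (Fin N) ℝ} (hA : ∀ j, (A j).IsSymm)
    (c : Fin n → ℝ) : (∑ j, c j • A j).IsSymm := by
  simp only [IsSymm, transpose_sum, transpose_smul, (hA _).eq]

open scoped MatrixOrder in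
lemma Matrix.PosSemidef.exists_eq_transpose_mul_self {L : Matrix (Fin N) (Fin N) ℝ}
    (hL : L.PosSemidef) : ∃ B : Matrix (Fin N) (Fin N) ℝ, L = Bᵀ * B := by
  obtain ⟨B, hB⟩ := CStarAlgebra.nonneg_iff_eq_star_mul_self.mp hL.nonneg
  exact ⟨B, by rwa [star_eq_conjTranspose, conjTranspose_eq_transpose_of_trivial] at hB⟩

lemma inner_matC_transpose (M : Matrix (Fin N) (Fin N) ℝ) (v w : EuclideanSpace ℂ (Fin N)) :
    ⟪v, matC Mᵀ w⟫_ℂ = ⟪matC M v, w⟫_ℂ := by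
  have : (Mᵀ).map Complex.ofReal = (M.map Complex.ofReal)ᴴ := by ext; simp
  rw [matC, this, toEuclideanLin_conjTranspose_eq_adjoint, LinearMap.adjoint_inner_right]; rfl

lemma inner_matC_transpose_self (M : Matrix (Fin N) (Fin N) ℝ) (v : EuclideanSpace ℂ (Fin N)) :
    ⟪v, matC Mᵀ v⟫_ℂ = conj ⟪v, matC M v⟫_ℂ := by
  rw [inner_matC_transpose, inner_conj_symm]

lemma im_inner_matC_self_of_isSymm {M : Matrix (Fin N) (Fin N) ℝ} (hM : M.IsSymm)
    (v : EuclideanSpace ℂ (Fin N)) : (⟪v, matC M v⟫_ℂ).im = 0 := by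
  rw [← Complex.conj_eq_iff_im, ← inner_matC_transpose_self, hM.eq]

lemma re_inner_matC_self_of_transpose_eq_neg {M : Matrix (Fin N) (Fin N) ℝ} (hM : Mᵀ = -M)
    (v : EuclideanSpace ℂ (Fin N)) : (⟪v, matC M v⟫_ℂ).re = 0 := by
  have h := congrArg Complex.re (inner_matC_transpose_self M v)
  rw [hM, matC_neg, LinearMap.neg_apply, inner_neg_right, Complex.neg_re, Complex.conj_re] at h
  linarith

lemma re_inner_matC_symPart (M : Matrix (Fin N) (Fin N) ℝ) (v : EuclideanSpace ℂ (Fin N)) :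
    (⟪v, matC (symPart M) v⟫_ℂ).re = (⟪v, matC M v⟫_ℂ).re := by
  rw [symPart, matC_smul, matC_add, LinearMap.smul_apply, LinearMap.add_apply, inner_smul_right,
    inner_add_right, inner_matC_transpose_self, Complex.re_ofReal_mul, Complex.add_re,
    Complex.conj_re]
  ring

lemma re_inner_matC_transpose_mul_self (B : Matrix (Fin N) (Fin N) ℝ)
    (v : EuclideanSpace ℂ (Fin N)) : (⟪v, matC (Bᵀ * B) v⟫_ℂ).re = ‖matC B v‖ ^ 2 := by
  rw [matC_mul_apply, inner_matC_transpose, inner_self_eq_norm_sq_to_K]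
  norm_cast

lemma re_inner_matC_self (M : Matrix (Fin N) (Fin N) ℝ) (v : EuclideanSpace ℂ (Fin N)) :
    (⟪v, matC M v⟫_ℂ).re = (fun i => (v i).re) ⬝ᵥ M *ᵥ (fun i => (v i).re)
      + (fun i => (v i).im) ⬝ᵥ M *ᵥ (fun i => (v i).im) := by
  simp only [matC, EuclideanSpace.inner_eq_star_dotProduct, dotProduct, mulVec,
    Complex.re_sum, ← Finset.sum_add_distrib, Finset.mul_sum]
  refine Finset.sum_congr rfl fun i _ => ?_
  simp only [ofLp_toLpLin, toLin'_apply, mulVec, dotProduct, map_apply, Finset.sum_mul,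
    Complex.re_sum]
  refine Finset.sum_congr rfl fun j _ => ?_
  simp only [Pi.star_apply, Complex.star_def, Complex.mul_re, Complex.ofReal_re, Complex.ofReal_im,
    Complex.conj_re, Complex.conj_im, Complex.mul_im]
  ring

lemma Matrix.PosDef.re_inner_matC_self_pos {M : Matrix (Fin N) (Fin N) ℝ} (hM : M.PosDef)
    {v : EuclideanSpace ℂ (Fin N)} (hv : v ≠ 0) : 0 < (⟪v, matC M v⟫_ℂ).re := by
  have hx := hM.posSemidef.dotProduct_mulVec_nonneg (fun i => (v i).re)
  have hy := hM.posSemidef.dotProduct_mulVec_nonneg (fun i => (v i).im)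
  simp only [star_trivial] at hx hy
  rw [re_inner_matC_self]
  by_cases hre : (fun i => (v i).re) = 0
  · have him : (fun i => (v i).im) ≠ 0 := fun him => hv <| by
      ext i; exact Complex.ext (congrFun hre i) (congrFun him i)
    simpa [star_trivial] using add_pos_of_nonneg_of_pos hx (hM.dotProduct_mulVec_pos him)
  · simpa [star_trivial] using add_pos_of_pos_of_nonneg (hM.dotProduct_mulVec_pos hre) hy

lemma norm_inner_matC_le (M : Matrix (Fin N) (Fin N) ℝ) (v w : EuclideanSpace ℂ (Fin N)) :
    ‖⟪v, matC M w⟫_ℂ‖ ≤ ‖v‖ * (‖matCL M‖ * ‖w‖) :=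
  (norm_inner_le_norm v _).trans <| by rw [← matCL_apply]; gcongr; exact (matCL M).le_opNorm w

lemma norm_inner_matC_mul_le (P Q : Matrix (Fin N) (Fin N) ℝ) (v w : EuclideanSpace ℂ (Fin N)) :
    ‖⟪v, matC (P * Q) w⟫_ℂ‖ ≤ ‖matCL P‖ * ‖matCL Q‖ * (‖v‖ * ‖w‖) := calc
  _ ≤ ‖v‖ * (‖matCL (P * Q)‖ * ‖w‖) := norm_inner_matC_le _ _ _
  _ ≤ ‖v‖ * (‖matCL P‖ * ‖matCL Q‖ * ‖w‖) := by rw [matCL_mul]; gcongr; exact norm_mul_le _ _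
  _ = _ := by ring

lemma inner_matC_mul_eq_zero_of_eigen {A0 S L : Matrix (Fin N) (Fin N) ℝ} {lam : ℂ}
    {v : EuclideanSpace ℂ (Fin N)} (h : lam • matC A0 v + Complex.I • matC S v + matC L v = 0)
    (P : Matrix (Fin N) (Fin N) ℝ) :
    lam * ⟪v, matC (P * A0) v⟫_ℂ + Complex.I * ⟪v, matC (P * S) v⟫_ℂ
      + ⟪v, matC (P * L) v⟫_ℂ = 0 := by
  simpa only [map_add, map_smul, map_zero, inner_add_right, inner_smul_right, inner_zero_right,
    ← matC_mul_apply] using congrArg (fun w => ⟪v, matC P w⟫_ℂ) h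

lemma eigen_energy_identity {A0 S B : Matrix (Fin N) (Fin N) ℝ} (hA0 : A0.IsSymm) (hS : S.IsSymm)
    {lam : ℂ} {v : EuclideanSpace ℂ (Fin N)}
    (h : lam • matC A0 v + Complex.I • matC S v + matC (Bᵀ * B) v = 0) :
    lam.re * (⟪v, matC A0 v⟫_ℂ).re + ‖matC B v‖ ^ 2 = 0 := by
  have h1 := congrArg Complex.re (inner_matC_mul_eq_zero_of_eigen h 1)
  simpa [Complex.mul_re, re_inner_matC_transpose_mul_self, im_inner_matC_self_of_isSymm hA0,
    im_inner_matC_self_of_isSymm hS] using h1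

lemma eigen_compensator_identity {A0 S L K : Matrix (Fin N) (Fin N) ℝ}
    (hK : (K * A0)ᵀ = -(K * A0)) {r : ℝ} {lam : ℂ} {v : EuclideanSpace ℂ (Fin N)}
    (h : lam • matC A0 v + Complex.I • matC (r • S) v + matC L v = 0) :
    lam.re * (⟪v, matC (K * A0) v⟫_ℂ).im + r * (⟪v, matC (K * S) v⟫_ℂ).re
      + (⟪v, matC (K * L) v⟫_ℂ).im = 0 := by
  have h1 := congrArg Complex.im (inner_matC_mul_eq_zero_of_eigen h K)
  rw [Matrix.mul_smul, matC_smul, LinearMap.smul_apply, inner_smul_right] at h1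
  simpa [Complex.mul_im, re_inner_matC_self_of_transpose_eq_neg hK] using h1

lemma eigen_energy_inequality {A0 S B K : Matrix (Fin N) (Fin N) ℝ} (hA0s : A0.IsSymm)
    (hS : S.IsSymm) (hKA0 : (K * A0)ᵀ = -(K * A0)) {θ r : ℝ}
    (hcoer : ∀ u, θ * ‖u‖ ^ 2 ≤ (⟪u, matC (symPart (K * S) + Bᵀ * B) u⟫_ℂ).re) (hr : 0 ≤ r)
    {lam : ℂ} {v : EuclideanSpace ℂ (Fin N)}
    (h : lam • matC A0 v + Complex.I • matC (r • S) v + matC (Bᵀ * B) v = 0) :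
    θ * r * ‖v‖ ^ 2 ≤ -lam.re * ((⟪v, matC (K * A0) v⟫_ℂ).im + r * (⟪v, matC A0 v⟫_ℂ).re)
      - (⟪v, matC (K * (Bᵀ * B)) v⟫_ℂ).im := by
  have hθ := mul_le_mul_of_nonneg_left (hcoer v) hr
  rw [matC_add, LinearMap.add_apply, inner_add_right, Complex.add_re, re_inner_matC_symPart,
    re_inner_matC_transpose_mul_self] at hθ
  have hE := eigen_energy_identity hA0s (hS.smul r) h
  have hC := eigen_compensator_identity hKA0 h
  linear_combination hθ + hC + r * hE

theorem eigen_energy_estimate {A0 S B K : Matrix (Fin N) (Fin N) ℝ} (hA0 : A0.PosDef)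
    (hA0s : A0.IsSymm) (hS : S.IsSymm) (hKA0 : (K * A0)ᵀ = -(K * A0)) {θ Λ r : ℝ} (hΛ : 1 ≤ Λ)
    (hKΛ : ‖matCL K‖ ≤ Λ) (hA0Λ : ‖matCL A0‖ ≤ Λ) (hBΛ : ‖matCL Bᵀ‖ ≤ Λ)
    (hcoer : ∀ u, θ * ‖u‖ ^ 2 ≤ (⟪u, matC (symPart (K * S) + Bᵀ * B) u⟫_ℂ).re) (hr : 0 ≤ r)
    {lam : ℂ} {v : EuclideanSpace ℂ (Fin N)} (hv : v ≠ 0)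
    (h : lam • matC A0 v + Complex.I • matC (r • S) v + matC (Bᵀ * B) v = 0) :
    θ * r ≤ Λ ^ 3 * (-lam.re + √(-lam.re) + r * -lam.re) := by
  have hineq := eigen_energy_inequality hA0s hS hKA0 hcoer hr h
  set μ := -lam.re
  set a := (⟪v, matC A0 v⟫_ℂ).re
  set b := ‖matC B v‖
  have hE : μ * a = b ^ 2 := by linarith [eigen_energy_identity hA0s (hS.smul r) h]
  have hμ : 0 ≤ μ := nonneg_of_mul_nonneg_left (hE ▸ sq_nonneg b) (hA0.re_inner_matC_self_pos hv)
  have hΛ2 : Λ ≤ Λ ^ 2 := le_self_pow₀ hΛ two_ne_zero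
  have hΛ3 : Λ * Λ ≤ Λ ^ 3 := by nlinarith
  have hΛ1 : Λ ≤ Λ ^ 3 := le_self_pow₀ hΛ three_ne_zero
  have ha : a ≤ Λ * ‖v‖ ^ 2 := calc
    a ≤ ‖v‖ * (‖matCL A0‖ * ‖v‖) := (Complex.re_le_norm _).trans (norm_inner_matC_le _ _ _)
    _ ≤ Λ * ‖v‖ ^ 2 := by nlinarith [norm_nonneg v]
  have hb : b ≤ √μ * Λ * ‖v‖ := by
    refine (sq_le_sq₀ (norm_nonneg _) (by positivity)).1 ?_
    rw [mul_pow, mul_pow, Real.sq_sqrt hμ, ← hE, mul_assoc]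
    gcongr
    exact ha.trans (by gcongr)
  have hβ : |(⟪v, matC (K * A0) v⟫_ℂ).im| ≤ Λ ^ 3 * ‖v‖ ^ 2 := calc
    _ ≤ ‖matCL K‖ * ‖matCL A0‖ * (‖v‖ * ‖v‖) :=
      (Complex.abs_im_le_norm _).trans (norm_inner_matC_mul_le _ _ _ _)
    _ ≤ Λ * Λ * (‖v‖ * ‖v‖) := by gcongr
    _ = Λ * Λ * ‖v‖ ^ 2 := by ring
    _ ≤ Λ ^ 3 * ‖v‖ ^ 2 := by gcongr
  have hε : |(⟪v, matC (K * (Bᵀ * B)) v⟫_ℂ).im| ≤ Λ ^ 3 * √μ * ‖v‖ ^ 2 := calc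
    _ ≤ ‖matCL K‖ * ‖matCL Bᵀ‖ * (‖v‖ * b) := by
      rw [← mul_assoc, matC_mul_apply _ B]
      exact (Complex.abs_im_le_norm _).trans (norm_inner_matC_mul_le _ _ _ _)
    _ ≤ Λ * Λ * (‖v‖ * (√μ * Λ * ‖v‖)) := by gcongr
    _ ≤ Λ ^ 3 * √μ * ‖v‖ ^ 2 := by nlinarith [norm_nonneg v, Real.sqrt_nonneg μ]
  have key : θ * r * ‖v‖ ^ 2 ≤ Λ ^ 3 * (μ + √μ + r * μ) * ‖v‖ ^ 2 := by
    have e1 := mul_le_mul_of_nonneg_left ((le_abs_self _).trans hβ) hμ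
    have e2 := (neg_le_abs (⟪v, matC (K * (Bᵀ * B)) v⟫_ℂ).im).trans hε
    have e3 : r * (μ * a) ≤ r * (μ * (Λ ^ 3 * ‖v‖ ^ 2)) := by
      gcongr; exact ha.trans (by gcongr)
    linarith
  exact le_of_mul_le_mul_right key (by positivity [norm_pos_iff.mpr hv])

end

theorem statement4_general (n N : ℕ)
    (A0 : Matrix (Fin N) (Fin N) ℝ) (A : Fin n → Matrix (Fin N) (Fin N) ℝ)
    (L : Matrix (Fin N) (Fin N) ℝ)
    (hA0 : A0.PosDef) (hA0s : A0.IsSymm) (hA : ∀ j, (A j).IsSymm)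
    (hL : L.PosSemidef)
    -- the [SK] hypothesis
    (K : EuclideanSpace ℝ (Fin n) → Matrix (Fin N) (Fin N) ℝ)
    (hKcont : ContinuousOn K (Metric.sphere (0 : EuclideanSpace ℝ (Fin n)) 1))
    (hKskew : ∀ ω ∈ Metric.sphere (0 : EuclideanSpace ℝ (Fin n)) 1,
      (K ω * A0).transpose = -(K ω * A0))
    (hKA : ∀ ω ∈ Metric.sphere (0 : EuclideanSpace ℝ (Fin n)) 1,
      (symPart (K ω * ∑ j, ω j • A j) + L).PosDef) :
    ∃ c : ℝ, 0 < c ∧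
      ∀ ξ : EuclideanSpace ℝ (Fin n), ξ ≠ 0 →
        ∀ (lam : ℂ) (v : EuclideanSpace ℂ (Fin N)), v ≠ 0 →
          lam • matC A0 v + Complex.I • matC (∑ j, ξ j • A j) v + matC L v = 0 →
          lam.re ≤ -(c * ‖ξ‖ ^ 2) / (1 + ‖ξ‖ ^ 2) := by
  obtain ⟨B, rfl⟩ := hL.exists_eq_transpose_mul_self
  have hsphere := isCompact_sphere (0 : EuclideanSpace ℝ (Fin n)) 1
  have hAω : Continuous fun ω : EuclideanSpace ℝ (Fin n) => ∑ j, ω j • A j := by fun_prop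
  obtain ⟨θ, hθ, hcoer⟩ := hsphere.exists_pos_forall_mul_norm_sq_le_re_inner
    (T := fun ω => matCL (symPart (K ω * ∑ j, ω j • A j) + Bᵀ * B))
    (continuous_matCL.comp_continuousOn
      ((continuous_symPart.comp_continuousOn (hKcont.mul hAω.continuousOn)).add continuousOn_const))
    fun ω hω _ hu => (hKA ω hω).re_inner_matC_self_pos hu
  obtain ⟨CK, hCK⟩ :=
    hsphere.exists_bound_of_continuousOn (continuous_matCL.comp_continuousOn hKcont)
  set Λ := max (max 1 CK) (max ‖matCL A0‖ ‖matCL Bᵀ‖)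
  have hΛ : 1 ≤ Λ := (le_max_left _ _).trans (le_max_left _ _)
  refine ⟨min (θ / (3 * Λ ^ 3)) ((θ / (3 * Λ ^ 3)) ^ 2), by positivity, fun ξ hξ lam v hv heq => ?_⟩
  have hr : 0 < ‖ξ‖ := norm_pos_iff.mpr hξ
  set ω := ‖ξ‖⁻¹ • ξ
  have hω : ω ∈ Metric.sphere 0 1 := by simp [ω, norm_smul, hr.ne']
  have hξω : ∑ j, ξ j • A j = ‖ξ‖ • ∑ j, ω j • A j := by
    simp [ω, Finset.smul_sum, smul_smul, hr.ne']
  rw [hξω] at heq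
  have hest := eigen_energy_estimate hA0 hA0s (isSymm_sum_smul hA _) (hKskew ω hω) hΛ
    ((hCK ω hω).trans ((le_max_right _ _).trans (le_max_left _ _)))
    ((le_max_left _ _).trans (le_max_right _ _)) ((le_max_right _ _).trans (le_max_right _ _))
    (hcoer ω hω) hr.le hv heq
  have := min_mul_sq_div_one_add_sq_le hθ (by positivity) hr hest
  rw [neg_div]
  linarith

theorem statement4 (n N : ℕ) (hn : 1 ≤ n) (hN : 1 ≤ N)
    (A0 : Matrix (Fin N) (Fin N) ℝ) (A : Fin n → Matrix (Fin N) (Fin N) ℝ)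
    (L : Matrix (Fin N) (Fin N) ℝ)
    (hA0 : A0.PosDef) (hA0s : A0.IsSymm) (hA : ∀ j, (A j).IsSymm)
    (hL : L.PosSemidef) (hLs : L.IsSymm)
    -- the [SK] hypothesis
    (K : EuclideanSpace ℝ (Fin n) → Matrix (Fin N) (Fin N) ℝ)
    (hKcont : ContinuousOn K (Metric.sphere (0 : EuclideanSpace ℝ (Fin n)) 1))
    (hKodd : ∀ ω ∈ Metric.sphere (0 : EuclideanSpace ℝ (Fin n)) 1, K (-ω) = -(K ω))
    (hKskew : ∀ ω ∈ Metric.sphere (0 : EuclideanSpace ℝ (Fin n)) 1,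
      (K ω * A0).transpose = -(K ω * A0))
    (hKA : ∀ ω ∈ Metric.sphere (0 : EuclideanSpace ℝ (Fin n)) 1,
      (symPart (K ω * ∑ j, ω j • A j) + L).PosDef) :
    ∃ c : ℝ, 0 < c ∧
      ∀ ξ : EuclideanSpace ℝ (Fin n), ξ ≠ 0 →
        ∀ (lam : ℂ) (v : EuclideanSpace ℂ (Fin N)), v ≠ 0 →
          lam • matC A0 v + Complex.I • matC (∑ j, ξ j • A j) v + matC L v = 0 →
          lam.re ≤ -(c * ‖ξ‖ ^ 2) / (1 + ‖ξ‖ ^ 2) :=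
  statement4_general n N A0 A L hA0 hA0s hA hL K hKcont hKskew hKA
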